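/- Let T > 0 and α ∈ (1/2, 1]. Let (Ω, F, P) be a probability space and, for each integer m ≥ 1, let ξ_{1,m}, …, ξ_{⌊mT⌋,m} be random variables satisfying condition (H2): there is a constant C₀ > 0 (independent of m) with E[|Σ_{i=j+1}^{k} ξ_{i,m}|^4] ≤ C₀ ((k−j)/m)² for all 0 ≤ j < k ≤ ⌊mT⌋. Let f : Ω × [0,T] → ℝ be such that f(·, t) is measurable for each t and, for P-almost every ω, the path f(ω, ·) is α-Hölder continuous on [0,T]. Then for every ε > 0: lim_{n→∞} limsup_{m→∞, m ≥ n} P( sup_{t ∈ [0,T]} | Σ_{i ∈ I_n(⌊nt⌋+1)} (f(·, t_i) − f(·, u_{⌊nt⌋})) ξ_{i,m} | > ε ) = 0. -/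

import Mathlib

/-!
Fix `K` and work on the event where the paths of `f` are `K`-Hölder at rational times; its
complement has small probability once `K` is large. On that event the block sum over
`I_n(k+1) = [lo, hi)` splits as `∑ (f(t_i) - f(t_lo)) ξ_i + (f(t_lo) - f(u_k)) ∑ ξ_i`. The second
term is controlled by Hölder continuity and (H2). For the first, halve the index interval
repeatedly and re-anchor each right half at its left end: with `β = α + 1/2` this gives the
`L⁴` bound `C ((hi - lo) / m)^β`, the recursion closing because `2^β > 2`, that is `α > 1/2`. Hence every block is `O(1/n)` in `L⁴` uniformly in `m ≥ n`, and Markov's inequality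
together with a union bound over the `⌊nT⌋ + 1` blocks gives probability `O(1/n)`.
-/

open MeasureTheory Finset Filter
open scoped ENNReal Topology

section LpBounds

variable {Ω : Type*} [MeasurableSpace Ω] {μ ν : Measure Ω}

lemma eLpNorm_four_le_of_lintegral_le {Y : Ω → ℝ} {C y : ℝ} (hC : 0 ≤ C) (hy : 0 ≤ y)
    (h : ∫⁻ ω, ENNReal.ofReal (|Y ω| ^ 4) ∂ν ≤ ENNReal.ofReal (C * y ^ 2)) :
    eLpNorm Y 4 ν ≤ ENNReal.ofReal (C ^ (1 / 4 : ℝ) * y ^ (1 / 2 : ℝ)) := by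
  have hpow : (C ^ (1 / 4 : ℝ) * y ^ (1 / 2 : ℝ)) ^ (4 : ℝ) = C * y ^ 2 := by
    rw [Real.mul_rpow (by positivity) (by positivity), ← Real.rpow_mul hC, ← Real.rpow_mul hy]
    norm_num
  rw [eLpNorm_eq_lintegral_rpow_enorm_toReal four_ne_zero ENNReal.ofNat_ne_top,
    one_div (ENNReal.toReal 4), ENNReal.toReal_ofNat, ENNReal.rpow_inv_le_iff (by norm_num),
    ENNReal.ofReal_rpow_of_nonneg (by positivity) (by norm_num), hpow]
  simpa [Real.enorm_eq_ofReal_abs, ENNReal.ofReal_rpow_of_nonneg] using h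

lemma measure_abs_ge_le_of_eLpNorm_le {Y : Ω → ℝ} (hY : AEStronglyMeasurable Y ν) {p : ℝ≥0∞}
    (hp₀ : p ≠ 0) (hp : p ≠ ∞) {ε r : ℝ} (hε : 0 < ε) (hr : 0 ≤ r)
    (h : eLpNorm Y p ν ≤ ENNReal.ofReal r) :
    ν {ω | ε ≤ |Y ω|} ≤ ENNReal.ofReal ((r / ε) ^ p.toReal) := by
  have hset : {ω | ε ≤ |Y ω|} = {ω | ENNReal.ofReal ε ≤ ‖Y ω‖ₑ} := by
    ext ω
    simp [Real.enorm_eq_ofReal_abs, ENNReal.ofReal_le_ofReal_iff (abs_nonneg _)]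
  rw [hset]
  refine (meas_ge_le_mul_pow_eLpNorm_enorm ν hp₀ hp hY (by simpa using hε) (by simp)).trans ?_
  calc (ENNReal.ofReal ε)⁻¹ ^ p.toReal * eLpNorm Y p ν ^ p.toReal
      ≤ ENNReal.ofReal ε⁻¹ ^ p.toReal * ENNReal.ofReal r ^ p.toReal := by
        rw [ENNReal.ofReal_inv_of_pos hε]
        gcongr
    _ = ENNReal.ofReal ((r / ε) ^ p.toReal) := by
        rw [← ENNReal.mul_rpow_of_nonneg _ _ ENNReal.toReal_nonneg,
          ← ENNReal.ofReal_mul (by positivity),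
          ENNReal.ofReal_rpow_of_nonneg (by positivity) ENNReal.toReal_nonneg, inv_mul_eq_div]

lemma measure_le_restrict_add_compl {B : Set Ω} (hB : MeasurableSet B) (S : Set Ω) :
    μ S ≤ μ.restrict B S + μ Bᶜ := by
  conv_lhs => rw [← Measure.restrict_add_restrict_compl (μ := μ) hB]
  rw [Measure.add_apply]
  exact add_le_add le_rfl <|
    (measure_mono (Set.subset_univ S)).trans_eq (Measure.restrict_apply_univ _)

end LpBounds

lemma tendsto_nhds_zero_of_eventually_le_add {ι : Type*} {l : Filter ι} {a : ι → ℝ≥0∞}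
    {b : ℕ → ℝ≥0∞} {u : ℕ → ι → ℝ≥0∞} (hb : Tendsto b atTop (𝓝 0))
    (hu : ∀ K, Tendsto (u K) l (𝓝 0)) (h : ∀ K, ∀ᶠ n in l, a n ≤ b K + u K n) :
    Tendsto a l (𝓝 0) := by
  rw [ENNReal.tendsto_nhds_zero]
  intro δ hδ
  have hδ2 := ENNReal.half_pos hδ.ne'
  obtain ⟨K, hK⟩ := (ENNReal.tendsto_nhds_zero.1 hb _ hδ2).exists
  filter_upwards [h K, ENNReal.tendsto_nhds_zero.1 (hu K) _ hδ2] with n han hun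
  calc a n ≤ b K + u K n := han
    _ ≤ δ / 2 + δ / 2 := add_le_add hK hun
    _ = δ := ENNReal.add_halves δ

lemma two_lt_two_rpow {β : ℝ} (hβ : 1 < β) : 2 < (2 : ℝ) ^ β := by
  simpa using Real.rpow_lt_rpow_of_exponent_lt one_lt_two hβ

-- `K * c / (2 ^ (α + γ) - 2)` is the fixed point of the recursion of one halving step.
lemma halving_recursion {K c x α γ : ℝ} (hx : 0 ≤ x) (hαγ : 1 < α + γ) :
    K * c / (2 ^ (α + γ) - 2) * x ^ (α + γ) +
        (K * c / (2 ^ (α + γ) - 2) * x ^ (α + γ) + K * x ^ α * (c * x ^ γ)) =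
      K * c / (2 ^ (α + γ) - 2) * (x * 2) ^ (α + γ) := by
  have hne : (2 : ℝ) ^ (α + γ) - 2 ≠ 0 := by linarith [two_lt_two_rpow hαγ]
  rw [Real.mul_rpow hx zero_le_two, Real.rpow_add' hx (by linarith)]
  field_simp
  ring

section Chaining

variable {Ω : Type*} [MeasurableSpace Ω] {ν : Measure Ω} {X : ℕ → Ω → ℝ} {g : Ω → ℕ → ℝ}
  {p : ℝ≥0∞}

lemma eLpNorm_sum_Ico_sub_mul_eq_zero {a b : ℕ} (hab : b ≤ a + 1) :
    eLpNorm (fun ω => ∑ i ∈ Ico a b, (g ω i - g ω a) * X i ω) p ν = 0 := by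
  have hzero : (fun ω => ∑ i ∈ Ico a b, (g ω i - g ω a) * X i ω) = 0 := by
    ext ω
    refine Finset.sum_eq_zero fun i hi => ?_
    obtain rfl : i = a := by rw [Finset.mem_Ico] at hi; omega
    simp
  rw [hzero, eLpNorm_zero]

lemma eLpNorm_sum_Ico_sub_mul_le_add (hp : 1 ≤ p) (hX : ∀ i, Measurable (X i))
    (hg : ∀ i, Measurable fun ω => g ω i) {v : Ω → ℝ} (hv : Measurable v) {a b : ℕ} {D r : ℝ}
    (hD : 0 ≤ D) (hgv : ∀ᵐ ω ∂ν, |g ω a - v ω| ≤ D)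
    (hS : eLpNorm (fun ω => ∑ i ∈ Ico a b, X i ω) p ν ≤ ENNReal.ofReal r) :
    eLpNorm (fun ω => ∑ i ∈ Ico a b, (g ω i - v ω) * X i ω) p ν ≤
      eLpNorm (fun ω => ∑ i ∈ Ico a b, (g ω i - g ω a) * X i ω) p ν + ENNReal.ofReal (D * r) := by
  have hsplit : (fun ω => ∑ i ∈ Ico a b, (g ω i - v ω) * X i ω) =
      (fun ω => ∑ i ∈ Ico a b, (g ω i - g ω a) * X i ω) +
        fun ω => (g ω a - v ω) * ∑ i ∈ Ico a b, X i ω := by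
    ext ω
    simp only [Pi.add_apply, Finset.mul_sum, ← Finset.sum_add_distrib]
    exact Finset.sum_congr rfl fun i _ => by ring
  rw [hsplit]
  refine (eLpNorm_add_le (by fun_prop) (by fun_prop) hp).trans (add_le_add le_rfl ?_)
  have hle : ∀ᵐ ω ∂ν, ‖(g ω a - v ω) * ∑ i ∈ Ico a b, X i ω‖ ≤ D * ‖∑ i ∈ Ico a b, X i ω‖ := by
    filter_upwards [hgv] with ω hω
    rw [norm_mul, Real.norm_eq_abs]
    exact mul_le_mul_of_nonneg_right hω (norm_nonneg _)
  calc eLpNorm (fun ω => (g ω a - v ω) * ∑ i ∈ Ico a b, X i ω) p ν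
      ≤ ENNReal.ofReal D * eLpNorm (fun ω => ∑ i ∈ Ico a b, X i ω) p ν :=
        eLpNorm_le_mul_eLpNorm_of_ae_le_mul hle p
    _ ≤ ENNReal.ofReal D * ENNReal.ofReal r := by gcongr
    _ = ENNReal.ofReal (D * r) := (ENNReal.ofReal_mul hD).symm

lemma eLpNorm_sum_Ico_sub_mul_le_split (hp : 1 ≤ p) (hX : ∀ i, Measurable (X i))
    (hg : ∀ i, Measurable fun ω => g ω i) {a c b : ℕ} (hac : a ≤ c) (hcb : c ≤ b) {D r : ℝ}
    (hD : 0 ≤ D) (hgc : ∀ᵐ ω ∂ν, |g ω c - g ω a| ≤ D)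
    (hS : eLpNorm (fun ω => ∑ i ∈ Ico c b, X i ω) p ν ≤ ENNReal.ofReal r) :
    eLpNorm (fun ω => ∑ i ∈ Ico a b, (g ω i - g ω a) * X i ω) p ν ≤
      eLpNorm (fun ω => ∑ i ∈ Ico a c, (g ω i - g ω a) * X i ω) p ν +
        (eLpNorm (fun ω => ∑ i ∈ Ico c b, (g ω i - g ω c) * X i ω) p ν +
          ENNReal.ofReal (D * r)) := by
  have hsplit : (fun ω => ∑ i ∈ Ico a b, (g ω i - g ω a) * X i ω) =
      (fun ω => ∑ i ∈ Ico a c, (g ω i - g ω a) * X i ω) +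
        fun ω => ∑ i ∈ Ico c b, (g ω i - g ω a) * X i ω := by
    ext ω
    exact (Finset.sum_Ico_consecutive _ hac hcb).symm
  rw [hsplit]
  exact (eLpNorm_add_le (by fun_prop) (by fun_prop) hp).trans <| add_le_add le_rfl <|
    eLpNorm_sum_Ico_sub_mul_le_add hp hX hg (hg a) hD hgc hS

theorem eLpNorm_sum_Ico_sub_mul_le_dyadic (hp : 1 ≤ p) (hX : ∀ i, Measurable (X i))
    (hg : ∀ i, Measurable fun ω => g ω i) {N₀ N₁ : ℕ} {h K c α γ : ℝ} (hh : 0 ≤ h)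
    (hK : 0 ≤ K) (hc : 0 ≤ c) (hα : 0 ≤ α) (hγ : 0 ≤ γ) (hαγ : 1 < α + γ)
    (hS : ∀ a b : ℕ, N₀ ≤ a → a < b → b ≤ N₁ →
      eLpNorm (fun ω => ∑ i ∈ Ico a b, X i ω) p ν ≤ ENNReal.ofReal (c * (h * (b - a)) ^ γ))
    (hH : ∀ᵐ ω ∂ν, ∀ i j : ℕ, i < N₁ → j < N₁ → |g ω i - g ω j| ≤ K * (h * |(i : ℝ) - j|) ^ α)
    (L : ℕ) {a b : ℕ} (ha : N₀ ≤ a) (hb : b ≤ N₁) (hL : b - a ≤ 2 ^ L) :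
    eLpNorm (fun ω => ∑ i ∈ Ico a b, (g ω i - g ω a) * X i ω) p ν ≤
      ENNReal.ofReal (K * c / (2 ^ (α + γ) - 2) * (h * 2 ^ L) ^ (α + γ)) := by
  set A := K * c / (2 ^ (α + γ) - 2)
  have hA : 0 ≤ A := div_nonneg (mul_nonneg hK hc) (by linarith [two_lt_two_rpow hαγ])
  induction L generalizing a b with
  | zero =>
    rw [eLpNorm_sum_Ico_sub_mul_eq_zero (by omega)]
    exact zero_le
  | succ L ih =>
    rcases le_or_gt b a with hba | hab
    · rw [eLpNorm_sum_Ico_sub_mul_eq_zero (by omega)]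
      exact zero_le
    set mid := a + (b - a) / 2
    obtain ⟨ha_mid, hmid_b, hmid_a, hb_mid⟩ :
        a ≤ mid ∧ mid < b ∧ mid - a ≤ 2 ^ L ∧ b - mid ≤ 2 ^ L := by
      rw [pow_succ] at hL; omega
    set x := h * 2 ^ L
    have hx : 0 ≤ x := by positivity
    have hdist : ∀ u v : ℕ, u ≤ v → v - u ≤ 2 ^ L → h * ((v : ℝ) - u) ≤ x := by
      intro u v hle huv
      rw [← Nat.cast_sub hle]
      exact mul_le_mul_of_nonneg_left (by exact_mod_cast huv) hh
    have hanchor : ∀ᵐ ω ∂ν, |g ω mid - g ω a| ≤ K * x ^ α := by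
      filter_upwards [hH] with ω hω
      refine (hω mid a (by omega) (by omega)).trans (mul_le_mul_of_nonneg_left ?_ hK)
      refine Real.rpow_le_rpow (by positivity) ?_ hα
      rw [abs_of_nonneg (by simp [ha_mid])]
      exact hdist a mid ha_mid hmid_a
    have hmoment : eLpNorm (fun ω => ∑ i ∈ Ico mid b, X i ω) p ν ≤ ENNReal.ofReal (c * x ^ γ) :=
      (hS mid b (ha.trans ha_mid) hmid_b hb).trans <| ENNReal.ofReal_le_ofReal <|
        mul_le_mul_of_nonneg_left (Real.rpow_le_rpow
          (mul_nonneg hh (sub_nonneg.2 (by exact_mod_cast hmid_b.le)))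
          (hdist mid b hmid_b.le hb_mid) hγ) hc
    refine (eLpNorm_sum_Ico_sub_mul_le_split hp hX hg ha_mid hmid_b.le (by positivity) hanchor
      hmoment).trans ?_
    calc _ ≤ ENNReal.ofReal (A * x ^ (α + γ)) +
            (ENNReal.ofReal (A * x ^ (α + γ)) + ENNReal.ofReal (K * x ^ α * (c * x ^ γ))) := by
          gcongr
          · exact ih ha (hmid_b.le.trans hb) hmid_a
          · exact ih (ha.trans ha_mid) hb hb_mid
      _ = ENNReal.ofReal (A * (h * 2 ^ (L + 1)) ^ (α + γ)) := by
          have hx2 : h * 2 ^ (L + 1) = x * 2 := by rw [pow_succ]; ring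
          rw [← ENNReal.ofReal_add (by positivity) (by positivity),
            ← ENNReal.ofReal_add (by positivity) (by positivity), hx2,
            halving_recursion hx hαγ]

theorem eLpNorm_sum_Ico_sub_mul_le (hp : 1 ≤ p) (hX : ∀ i, Measurable (X i))
    (hg : ∀ i, Measurable fun ω => g ω i) {N₀ N₁ : ℕ} {h K c α γ : ℝ} (hh : 0 ≤ h)
    (hK : 0 ≤ K) (hc : 0 ≤ c) (hα : 0 ≤ α) (hγ : 0 ≤ γ) (hαγ : 1 < α + γ)
    (hS : ∀ a b : ℕ, N₀ ≤ a → a < b → b ≤ N₁ →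
      eLpNorm (fun ω => ∑ i ∈ Ico a b, X i ω) p ν ≤ ENNReal.ofReal (c * (h * (b - a)) ^ γ))
    (hH : ∀ᵐ ω ∂ν, ∀ i j : ℕ, i < N₁ → j < N₁ → |g ω i - g ω j| ≤ K * (h * |(i : ℝ) - j|) ^ α)
    {a b : ℕ} (ha : N₀ ≤ a) (hab : a < b) (hb : b ≤ N₁) {δ : ℝ} (hδ : h * (b - a) ≤ δ)
    {v : Ω → ℝ} (hv : Measurable v) (hgv : ∀ᵐ ω ∂ν, |g ω a - v ω| ≤ K * δ ^ α) :
    eLpNorm (fun ω => ∑ i ∈ Ico a b, (g ω i - v ω) * X i ω) p ν ≤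
      ENNReal.ofReal (K * c * (2 ^ (α + γ) / (2 ^ (α + γ) - 2) + 1) * δ ^ (α + γ)) := by
  have hba : 0 ≤ h * ((b : ℝ) - a) := mul_nonneg hh (sub_nonneg.2 (by exact_mod_cast hab.le))
  have hδ0 : 0 ≤ δ := hba.trans hδ
  set L := Nat.log 2 (b - a) + 1
  have hL : b - a ≤ 2 ^ L := (Nat.lt_pow_succ_log_self one_lt_two _).le
  have hL' : h * 2 ^ L ≤ 2 * δ := by
    have : 2 ^ L ≤ 2 * (b - a) := by
      rw [pow_succ, mul_comm]
      exact Nat.mul_le_mul_left 2 (Nat.pow_log_le_self 2 (by omega))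
    calc h * 2 ^ L ≤ h * (2 * ((b : ℝ) - a)) := by
          gcongr
          rw [← Nat.cast_sub hab.le]
          exact_mod_cast this
      _ ≤ 2 * δ := by linarith
  have h2β := two_lt_two_rpow hαγ
  have hmoment : eLpNorm (fun ω => ∑ i ∈ Ico a b, X i ω) p ν ≤ ENNReal.ofReal (c * δ ^ γ) :=
    (hS a b ha hab hb).trans <| ENNReal.ofReal_le_ofReal <|
      mul_le_mul_of_nonneg_left (Real.rpow_le_rpow hba hδ hγ) hc
  refine (eLpNorm_sum_Ico_sub_mul_le_add hp hX hg hv (by positivity) hgv hmoment).trans ?_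
  refine (add_le_add (eLpNorm_sum_Ico_sub_mul_le_dyadic hp hX hg hh hK hc hα hγ hαγ hS hH L ha hb hL)
    le_rfl).trans ?_
  have hA : 0 ≤ K * c / (2 ^ (α + γ) - 2) := div_nonneg (mul_nonneg hK hc) (by linarith)
  have hchain : (h * 2 ^ L) ^ (α + γ) ≤ 2 ^ (α + γ) * δ ^ (α + γ) := by
    rw [← Real.mul_rpow zero_le_two hδ0]
    exact Real.rpow_le_rpow (by positivity) hL' (by linarith)
  have hprod : K * δ ^ α * (c * δ ^ γ) = K * c * δ ^ (α + γ) := by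
    rw [Real.rpow_add' hδ0 (by linarith)]; ring
  rw [← ENNReal.ofReal_add (by positivity) (by positivity), hprod]
  refine ENNReal.ofReal_le_ofReal ?_
  calc K * c / (2 ^ (α + γ) - 2) * (h * 2 ^ L) ^ (α + γ) + K * c * δ ^ (α + γ)
      ≤ K * c / (2 ^ (α + γ) - 2) * (2 ^ (α + γ) * δ ^ (α + γ)) + K * c * δ ^ (α + γ) := by
        gcongr
    _ = K * c * (2 ^ (α + γ) / (2 ^ (α + γ) - 2) + 1) * δ ^ (α + γ) := by ring

end Chaining

section HolderSet

variable {Ω : Type*} {f : Ω → ℝ → ℝ} {T α : ℝ}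

-- Rational times keep the set measurable, and every grid point `i / m`, `k / n` is rational.
def holderSet (f : Ω → ℝ → ℝ) (T α K : ℝ) : Set Ω :=
  {ω | ∀ q r : ℚ, (q : ℝ) ∈ Set.Icc 0 T → (r : ℝ) ∈ Set.Icc 0 T →
    |f ω q - f ω r| ≤ K * |(q : ℝ) - r| ^ α}

lemma holderSet_mono {K K' : ℝ} (hKK' : K ≤ K') : holderSet f T α K ⊆ holderSet f T α K' :=
  fun _ hω q r hq hr => (hω q r hq hr).trans <|
    mul_le_mul_of_nonneg_right hKK' (Real.rpow_nonneg (abs_nonneg _) α)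

lemma abs_sub_le_of_mem_holderSet {K : ℝ} {ω : Ω} (hω : ω ∈ holderSet f T α K) {a b c d : ℕ}
    (hab : (a : ℝ) / b ≤ T) (hcd : (c : ℝ) / d ≤ T) :
    |f ω (a / b) - f ω (c / d)| ≤ K * |(a : ℝ) / b - c / d| ^ α := by
  have := hω (a / b) (c / d) ⟨by push_cast; positivity, by push_cast; exact hab⟩
    ⟨by push_cast; positivity, by push_cast; exact hcd⟩
  push_cast at this
  exact this

variable [MeasurableSpace Ω] {μ : Measure Ω}

lemma measurableSet_holderSet (hf : ∀ t, Measurable fun ω => f ω t) (K : ℝ) :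
    MeasurableSet (holderSet f T α K) := by
  simp only [holderSet, Set.ofPred_forall]
  exact .iInter fun q => .iInter fun r => .iInter fun _ => .iInter fun _ =>
    measurableSet_le ((hf q).sub (hf r)).abs measurable_const

lemma tendsto_measure_compl_holderSet [IsFiniteMeasure μ] (hf : ∀ t, Measurable fun ω => f ω t)
    (hHolder : ∀ᵐ ω ∂μ, ∃ H : ℝ, ∀ u ∈ Set.Icc (0 : ℝ) T, ∀ v ∈ Set.Icc (0 : ℝ) T,
      |f ω u - f ω v| ≤ H * |u - v| ^ α) :
    Tendsto (fun K : ℕ => μ (holderSet f T α K)ᶜ) atTop (𝓝 0) := by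
  have hnull : μ (⋂ K : ℕ, (holderSet f T α K)ᶜ) = 0 := by
    rw [← Set.compl_iUnion, ← mem_ae_iff]
    filter_upwards [hHolder] with ω ⟨H, hH⟩
    exact Set.mem_iUnion.2 ⟨⌈H⌉₊, holderSet_mono (Nat.le_ceil H)
      fun q r hq hr => hH q hq r hr⟩
  rw [← hnull]
  exact tendsto_measure_iInter_atTop
    (fun K => (measurableSet_holderSet hf _).compl.nullMeasurableSet)
    (fun K K' hKK' => Set.compl_subset_compl.2 (holderSet_mono (by exact_mod_cast hKK')))
    ⟨0, measure_ne_top μ _⟩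

end HolderSet

section Blocks

/-- The paper's block `I_n(j)`, with `M = ⌊m T⌋`. -/
noncomputable def blockIndices (n m M j : ℕ) : Finset ℕ :=
  (Icc 1 M).filter fun i => ((j : ℝ) - 1) / n ≤ (i : ℝ) / m ∧ (i : ℝ) / m < (j : ℝ) / n

lemma blockIndices_succ_eq_Ico {n m : ℕ} (hn : 0 < n) (hm : 0 < m) (M k : ℕ) :
    blockIndices n m M (k + 1) =
      Ico (max 1 ⌈(k : ℝ) * m / n⌉₊) (min (M + 1) ⌈((k : ℝ) + 1) * m / n⌉₊) := by
  have hn' : (0 : ℝ) < n := by exact_mod_cast hn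
  have hm' : (0 : ℝ) < m := by exact_mod_cast hm
  ext i
  simp only [blockIndices, mem_filter, mem_Icc, mem_Ico, max_le_iff, lt_min_iff, Nat.ceil_le,
    Nat.lt_ceil, Nat.cast_add, Nat.cast_one, add_sub_cancel_right, div_le_div_iff₀ hn' hm',
    div_lt_div_iff₀ hm' hn', div_le_iff₀ hn', lt_div_iff₀ hn', Nat.lt_add_one_iff]
  tauto

lemma abs_div_sub_div_le_of_ceil_le {n m k i : ℕ} (hn : 0 < n) (hm : 0 < m)
    (hi₁ : ⌈(k : ℝ) * m / n⌉₊ ≤ i) (hi₂ : i < ⌈((k : ℝ) + 1) * m / n⌉₊) :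
    |(i : ℝ) / m - k / n| ≤ 1 / n := by
  have hn' : (0 : ℝ) < n := by exact_mod_cast hn
  have hm' : (0 : ℝ) < m := by exact_mod_cast hm
  have h₁ : (k : ℝ) / n ≤ i / m := by
    rw [div_le_div_iff₀ hn' hm', ← div_le_iff₀ hn']
    exact Nat.ceil_le.1 hi₁
  have h₂ : (i : ℝ) / m < k / n + 1 / n := by
    rw [← add_div, div_lt_div_iff₀ hm' hn', ← lt_div_iff₀ hn']
    exact Nat.lt_ceil.1 hi₂
  rw [abs_le]
  constructor <;> linarith [div_pos one_pos hn']

lemma inv_mul_sub_le_of_ceil_le {n m k a b : ℕ} (hn : 0 < n) (hnm : n ≤ m)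
    (ha : ⌈(k : ℝ) * m / n⌉₊ ≤ a) (hb : b ≤ ⌈((k : ℝ) + 1) * m / n⌉₊) :
    (m : ℝ)⁻¹ * (b - a) ≤ 2 / n := by
  have hn' : (0 : ℝ) < n := by exact_mod_cast hn
  have hnm' : (n : ℝ) ≤ m := by exact_mod_cast hnm
  have hm' : (0 : ℝ) < m := hn'.trans_le hnm'
  have hlen : (b : ℝ) - a ≤ m / n + 1 := by
    have ha' : (k : ℝ) * m / n ≤ a := Nat.ceil_le.1 ha
    have hb' : (b : ℝ) < ((k : ℝ) + 1) * m / n + 1 :=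
      (Nat.cast_le.2 hb).trans_lt (Nat.ceil_lt_add_one (by positivity))
    have : ((k : ℝ) + 1) * m / n = k * m / n + m / n := by ring
    linarith
  calc (m : ℝ)⁻¹ * (b - a) ≤ (m : ℝ)⁻¹ * (m / n + 1) := by gcongr
    _ = 1 / n + 1 / m := by field_simp
    _ ≤ 1 / n + 1 / n := by linarith [one_div_le_one_div_of_le hn' hnm']
    _ = 2 / n := by ring

lemma natCast_div_le_of_le_floor {T : ℝ} (hT : 0 ≤ T) {m i : ℕ} (hm : 0 < m)
    (hi : i ≤ ⌊(m : ℝ) * T⌋₊) : (i : ℝ) / m ≤ T := by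
  rw [div_le_iff₀ (by exact_mod_cast hm), mul_comm]
  exact (Nat.le_floor_iff (by positivity)).1 hi

lemma setOf_lt_iSup_subset_biUnion {Ω : Type*} {F : ℕ → Ω → ℝ} {T ε : ℝ} (hT : 0 ≤ T) (n : ℕ) :
    {ω | ε < ⨆ t : Set.Icc (0 : ℝ) T, |F ⌊(n : ℝ) * t⌋₊ ω|} ⊆
      ⋃ k ∈ range (⌊(n : ℝ) * T⌋₊ + 1), {ω | ε ≤ |F k ω|} := by
  have : Nonempty (Set.Icc (0 : ℝ) T) := ⟨⟨0, le_rfl, hT⟩⟩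
  intro ω hω
  by_contra hcon
  simp only [Set.mem_iUnion, Set.mem_ofPred_eq, mem_range, not_exists, not_le] at hcon
  refine (lt_irrefl ε) (hω.trans_le (ciSup_le fun t => (hcon _ ?_).le))
  exact Nat.lt_succ_of_le (Nat.floor_le_floor (mul_le_mul_of_nonneg_left t.2.2 (Nat.cast_nonneg n)))

variable {Ω : Type*} [MeasurableSpace Ω] {μ : Measure Ω}

lemma eLpNorm_sum_Ico_le_of_moment {ξ : ℕ → Ω → ℝ} {m M : ℕ} {C₀ : ℝ} (hC₀ : 0 ≤ C₀)
    (hH2 : ∀ j k : ℕ, j < k → k ≤ M →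
      (∫⁻ ω, ENNReal.ofReal (|∑ i ∈ Icc (j + 1) k, ξ i ω| ^ 4) ∂μ)
        ≤ ENNReal.ofReal (C₀ * (((k : ℝ) - (j : ℝ)) / m) ^ 2))
    {ν : Measure Ω} (hν : ν ≤ μ) {a b : ℕ} (ha : 1 ≤ a) (hab : a < b) (hb : b ≤ M + 1) :
    eLpNorm (fun ω => ∑ i ∈ Ico a b, ξ i ω) 4 ν ≤
      ENNReal.ofReal (C₀ ^ (1 / 4 : ℝ) * ((m : ℝ)⁻¹ * (b - a)) ^ (1 / 2 : ℝ)) := by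
  obtain ⟨j, rfl⟩ : ∃ j, a = j + 1 := ⟨a - 1, by omega⟩
  obtain ⟨k, rfl⟩ : ∃ k, b = k + 1 := ⟨b - 1, by omega⟩
  have hlen : (m : ℝ)⁻¹ * (((k + 1 : ℕ) : ℝ) - ((j + 1 : ℕ) : ℝ)) = ((k : ℝ) - j) / m := by
    push_cast; ring
  refine (eLpNorm_mono_measure _ hν).trans ?_
  rw [hlen, Finset.Ico_add_one_right_eq_Icc]
  exact eLpNorm_four_le_of_lintegral_le hC₀
    (div_nonneg (sub_nonneg.2 (by exact_mod_cast (by omega : j ≤ k))) (Nat.cast_nonneg _))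
    (hH2 j k (by omega) (by omega))

theorem eLpNorm_sum_Ico_grid_le {T α C₀ K : ℝ} (hT : 0 ≤ T) (hα : 1 / 2 < α) (hC₀ : 0 ≤ C₀)
    (hK : 0 ≤ K) {ξ : ℕ → Ω → ℝ} (hξ : ∀ i, Measurable (ξ i)) {m : ℕ} (hm : 0 < m)
    (hH2 : ∀ j k : ℕ, j < k → k ≤ ⌊(m : ℝ) * T⌋₊ →
      (∫⁻ ω, ENNReal.ofReal (|∑ i ∈ Icc (j + 1) k, ξ i ω| ^ 4) ∂μ)
        ≤ ENNReal.ofReal (C₀ * (((k : ℝ) - (j : ℝ)) / m) ^ 2))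
    {f : Ω → ℝ → ℝ} (hf : ∀ t, Measurable fun ω => f ω t) {lo hi : ℕ} (hlo : 1 ≤ lo)
    (hlohi : lo < hi) (hhi : hi ≤ ⌊(m : ℝ) * T⌋₊ + 1) {k n : ℕ} (hkn : (k : ℝ) / n ≤ T)
    {δ : ℝ} (hanchor : |(lo : ℝ) / m - k / n| ≤ δ) (hδ : (m : ℝ)⁻¹ * (hi - lo) ≤ δ) :
    eLpNorm (fun ω => ∑ i ∈ Ico lo hi, (f ω (i / m) - f ω (k / n)) * ξ i ω) 4
        (μ.restrict (holderSet f T α K)) ≤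
      ENNReal.ofReal (K * C₀ ^ (1 / 4 : ℝ) *
        (2 ^ (α + 1 / 2) / (2 ^ (α + 1 / 2) - 2) + 1) * δ ^ (α + 1 / 2)) := by
  have hgrid : ∀ i, i < ⌊(m : ℝ) * T⌋₊ + 1 → (i : ℝ) / m ≤ T := fun i hi =>
    natCast_div_le_of_le_floor hT hm (Nat.lt_succ_iff.1 hi)
  have hmem := ae_restrict_mem (μ := μ) (measurableSet_holderSet (T := T) (α := α) hf K)
  have hHolder : ∀ᵐ ω ∂μ.restrict (holderSet f T α K), ∀ i j : ℕ,
      i < ⌊(m : ℝ) * T⌋₊ + 1 → j < ⌊(m : ℝ) * T⌋₊ + 1 →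
      |f ω (i / m) - f ω (j / m)| ≤ K * ((m : ℝ)⁻¹ * |(i : ℝ) - j|) ^ α := by
    filter_upwards [hmem] with ω hω i j hi hj
    have := abs_sub_le_of_mem_holderSet hω (hgrid i hi) (hgrid j hj)
    rw [inv_mul_eq_div]
    rwa [← sub_div, abs_div, Nat.abs_cast] at this
  have hanchor' : ∀ᵐ ω ∂μ.restrict (holderSet f T α K),
      |f ω (lo / m) - f ω (k / n)| ≤ K * δ ^ α := by
    filter_upwards [hmem] with ω hω
    refine (abs_sub_le_of_mem_holderSet hω (hgrid lo (hlohi.trans_le hhi)) hkn).trans ?_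
    gcongr
  exact eLpNorm_sum_Ico_sub_mul_le (g := fun ω i => f ω (i / m)) (v := fun ω => f ω (k / n))
    (by norm_num) hξ (fun i => hf _) (inv_nonneg.2 (Nat.cast_nonneg m)) hK (by positivity)
    (by linarith) (by norm_num) (by linarith)
    (fun a b => eLpNorm_sum_Ico_le_of_moment hC₀ hH2 Measure.restrict_le_self)
    hHolder hlo hlohi hhi hδ (hf _) hanchor'

theorem exists_eLpNorm_blockSum_le {T α C₀ : ℝ} (hT : 0 ≤ T) (hα : 1 / 2 < α) (hC₀ : 0 ≤ C₀)
    {ξ : ℕ → ℕ → Ω → ℝ} (hξ : ∀ m i, Measurable (ξ m i))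
    (hH2 : ∀ m : ℕ, 1 ≤ m → ∀ j k : ℕ, j < k → k ≤ ⌊(m : ℝ) * T⌋₊ →
      (∫⁻ ω, ENNReal.ofReal (|∑ i ∈ Icc (j + 1) k, ξ m i ω| ^ 4) ∂μ)
        ≤ ENNReal.ofReal (C₀ * (((k : ℝ) - (j : ℝ)) / m) ^ 2))
    {f : Ω → ℝ → ℝ} (hf : ∀ t, Measurable fun ω => f ω t) {K : ℝ} (hK : 0 ≤ K) :
    ∃ C, ∀ n m k : ℕ, 1 ≤ n → n ≤ m → k ≤ ⌊(n : ℝ) * T⌋₊ →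
      eLpNorm (fun ω => ∑ i ∈ blockIndices n m ⌊(m : ℝ) * T⌋₊ (k + 1),
          (f ω (i / m) - f ω (k / n)) * ξ m i ω) 4 (μ.restrict (holderSet f T α K))
        ≤ ENNReal.ofReal (C / n) := by
  set β := α + 1 / 2 with hβ
  set A := K * C₀ ^ (1 / 4 : ℝ) * (2 ^ β / (2 ^ β - 2) + 1)
  have hA : 0 ≤ A := by
    have h2β := two_lt_two_rpow (by linarith : (1 : ℝ) < β)
    have : 0 ≤ (2 : ℝ) ^ β / (2 ^ β - 2) := div_nonneg (by positivity) (by linarith)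
    positivity
  refine ⟨A * 2 ^ β, fun n m k hn hnm hk => ?_⟩
  have hm : 0 < m := by omega
  rw [blockIndices_succ_eq_Ico hn hm]
  set lo := max 1 ⌈(k : ℝ) * m / n⌉₊
  set hi := min (⌊(m : ℝ) * T⌋₊ + 1) ⌈((k : ℝ) + 1) * m / n⌉₊
  rcases le_or_gt hi lo with hempty | hlohi
  · simp [Finset.Ico_eq_empty_of_le hempty]
  have hanchor := abs_div_sub_div_le_of_ceil_le (i := lo) hn hm (le_max_right _ _)
    (hlohi.trans_le (min_le_right _ _))
  have hδ := inv_mul_sub_le_of_ceil_le (a := lo) (b := hi) hn hnm (le_max_right _ _)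
    (min_le_right _ _)
  have hone_two : (1 : ℝ) / n ≤ 2 / n := by gcongr; norm_num
  refine (eLpNorm_sum_Ico_grid_le hT hα hC₀ hK (hξ m) hm (hH2 m hm) hf (le_max_left _ _) hlohi
    (min_le_left _ _) (natCast_div_le_of_le_floor hT hn hk) (hanchor.trans hone_two) hδ).trans
    (ENNReal.ofReal_le_ofReal ?_)
  have hscale : (2 / n : ℝ) ^ β ≤ 2 ^ β / n := by
    rw [div_eq_mul_inv (2 : ℝ), Real.mul_rpow zero_le_two (by positivity), div_eq_mul_inv]
    gcongr
    exact Real.rpow_le_self_of_le_one (by positivity)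
      (inv_le_one_of_one_le₀ (by exact_mod_cast hn)) (by linarith)
  calc A * (2 / n : ℝ) ^ β ≤ A * (2 ^ β / n) := by gcongr
    _ = A * 2 ^ β / n := by ring

lemma floor_add_one_mul_div_pow_four_le {T : ℝ} (hT : 0 ≤ T) {n : ℕ} (hn : 1 ≤ n) (c : ℝ) :
    ((⌊(n : ℝ) * T⌋₊ : ℝ) + 1) * (c / n) ^ 4 ≤ (T + 1) * c ^ 4 / n := by
  have hn' : (1 : ℝ) ≤ n := by exact_mod_cast hn
  have hfloor : (⌊(n : ℝ) * T⌋₊ : ℝ) + 1 ≤ n * (T + 1) := by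
    nlinarith [Nat.floor_le (by positivity : 0 ≤ (n : ℝ) * T)]
  calc ((⌊(n : ℝ) * T⌋₊ : ℝ) + 1) * (c / n) ^ 4 ≤ n * (T + 1) * (c ^ 4 / n ^ 4) := by
        rw [div_pow]; gcongr
    _ = (T + 1) * c ^ 4 / n / n ^ 2 := by field_simp
    _ ≤ (T + 1) * c ^ 4 / n := div_le_self (by positivity) (one_le_pow₀ hn')

theorem exists_measure_sup_blockSum_gt_le {T α C₀ : ℝ} (hT : 0 ≤ T) (hα : 1 / 2 < α)
    (hC₀ : 0 ≤ C₀) {ξ : ℕ → ℕ → Ω → ℝ} (hξ : ∀ m i, Measurable (ξ m i))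
    (hH2 : ∀ m : ℕ, 1 ≤ m → ∀ j k : ℕ, j < k → k ≤ ⌊(m : ℝ) * T⌋₊ →
      (∫⁻ ω, ENNReal.ofReal (|∑ i ∈ Icc (j + 1) k, ξ m i ω| ^ 4) ∂μ)
        ≤ ENNReal.ofReal (C₀ * (((k : ℝ) - (j : ℝ)) / m) ^ 2))
    {f : Ω → ℝ → ℝ} (hf : ∀ t, Measurable fun ω => f ω t) (K : ℕ) {ε : ℝ} (hε : 0 < ε) :
    ∃ C, ∀ n m : ℕ, 1 ≤ n → n ≤ m →
      μ {ω | ε < ⨆ t : Set.Icc (0 : ℝ) T,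
          |∑ i ∈ blockIndices n m ⌊(m : ℝ) * T⌋₊ (⌊(n : ℝ) * t⌋₊ + 1),
            (f ω (i / m) - f ω (⌊(n : ℝ) * t⌋₊ / n)) * ξ m i ω|}
        ≤ μ (holderSet f T α K)ᶜ + ENNReal.ofReal (C / n) := by
  obtain ⟨C, hC⟩ := exists_eLpNorm_blockSum_le (μ := μ) hT hα hC₀ hξ hH2 hf (Nat.cast_nonneg K)
  set C' := max C 0
  refine ⟨(T + 1) * (C' / ε) ^ 4, fun n m hn hnm => ?_⟩
  have hn' : (0 : ℝ) < n := by exact_mod_cast hn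
  set F : ℕ → Ω → ℝ := fun k ω => ∑ i ∈ blockIndices n m ⌊(m : ℝ) * T⌋₊ (k + 1),
    (f ω (i / m) - f ω (k / n)) * ξ m i ω
  have hmarkov : ∀ k ∈ range (⌊(n : ℝ) * T⌋₊ + 1),
      μ.restrict (holderSet f T α K) {ω | ε ≤ |F k ω|} ≤ ENNReal.ofReal ((C' / ε / n) ^ 4) := by
    intro k hk
    have hle := (hC n m k hn hnm (Nat.lt_succ_iff.1 (mem_range.1 hk))).trans
      (ENNReal.ofReal_le_ofReal (div_le_div_of_nonneg_right (le_max_left C 0) hn'.le))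
    rw [div_right_comm]
    simpa using measure_abs_ge_le_of_eLpNorm_le (by fun_prop) four_ne_zero ENNReal.ofNat_ne_top hε
      (by positivity) hle
  calc μ _ ≤ μ.restrict (holderSet f T α K) (⋃ k ∈ range (⌊(n : ℝ) * T⌋₊ + 1),
          {ω | ε ≤ |F k ω|}) + μ (holderSet f T α K)ᶜ :=
        (measure_le_restrict_add_compl (measurableSet_holderSet hf _) _).trans
          (add_le_add (measure_mono (setOf_lt_iSup_subset_biUnion hT n)) le_rfl)
    _ ≤ (∑ k ∈ range (⌊(n : ℝ) * T⌋₊ + 1), ENNReal.ofReal ((C' / ε / n) ^ 4)) +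
          μ (holderSet f T α K)ᶜ :=
        add_le_add ((measure_biUnion_finset_le _ _).trans (sum_le_sum hmarkov)) le_rfl
    _ ≤ μ (holderSet f T α K)ᶜ + ENNReal.ofReal ((T + 1) * (C' / ε) ^ 4 / n) := by
        rw [add_comm, sum_const, card_range, nsmul_eq_mul, ← ENNReal.ofReal_natCast,
          ← ENNReal.ofReal_mul (by positivity)]
        push_cast
        gcongr
        exact floor_add_one_mul_div_pow_four_le hT hn _

end Blocks

theorem stmt_14_general (T α : ℝ) (hT : 0 < T) (hα : 1 / 2 < α)
    (Ω : Type) (m0 : MeasurableSpace Ω) (μ : Measure Ω) (hμ : IsProbabilityMeasure μ)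
    (ξ : ℕ → ℕ → Ω → ℝ) (hmeas : ∀ m i : ℕ, Measurable (ξ m i))
    (C₀ : ℝ) (hC₀ : 0 < C₀)
    (hH2 : ∀ m : ℕ, 1 ≤ m → ∀ j k : ℕ, j < k → k ≤ ⌊(m : ℝ) * T⌋₊ →
      (∫⁻ ω, ENNReal.ofReal (|∑ i ∈ Finset.Icc (j + 1) k, ξ m i ω| ^ 4) ∂μ)
        ≤ ENNReal.ofReal (C₀ * (((k : ℝ) - (j : ℝ)) / m) ^ 2))
    (f : Ω → ℝ → ℝ) (hfmeas : ∀ t : ℝ, Measurable fun ω => f ω t)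
    (hfHolder : ∀ᵐ ω ∂μ, ∃ H : ℝ, ∀ u ∈ Set.Icc (0 : ℝ) T, ∀ v ∈ Set.Icc (0 : ℝ) T,
      |f ω u - f ω v| ≤ H * |u - v| ^ α) :
    ∀ ε : ℝ, 0 < ε →
      Tendsto (fun n : ℕ =>
        limsup (fun m : ℕ =>
          μ {ω : Ω | ε < ⨆ t : Set.Icc (0 : ℝ) T,
            |∑ i ∈ (Finset.Icc 1 ⌊(m : ℝ) * T⌋₊).filter
                (fun i : ℕ =>
                  ((⌊(n : ℝ) * (t : ℝ)⌋₊ + 1 : ℕ) - 1 : ℝ) / n ≤ (i : ℝ) / m ∧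
                    (i : ℝ) / m < ((⌊(n : ℝ) * (t : ℝ)⌋₊ + 1 : ℕ) : ℝ) / n),
              (f ω ((i : ℝ) / m) - f ω ((⌊(n : ℝ) * (t : ℝ)⌋₊ : ℝ) / (n : ℝ))) * ξ m i ω|}) atTop)
        atTop (nhds 0) := by
  intro ε hε
  choose C hC using fun K : ℕ =>
    exists_measure_sup_blockSum_gt_le hT.le hα hC₀.le hmeas hH2 hfmeas K hε
  refine tendsto_nhds_zero_of_eventually_le_add (tendsto_measure_compl_holderSet hfmeas hfHolder)
    (fun K => ENNReal.ofReal_zero ▸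
      ENNReal.tendsto_ofReal (tendsto_const_div_atTop_nhds_zero_nat (C K))) fun K => ?_
  filter_upwards [eventually_ge_atTop 1] with n hn
  refine limsup_le_of_le (by isBoundedDefault) ?_
  filter_upwards [eventually_ge_atTop n] with m hnm
  exact hC K n m hn hnm

/-- Convergence of the last (incomplete) block term: for `T > 0`, `α ∈ (1/2,1]`, random
weights `ξ_{i,m}` satisfying (H2) and a process `f` with measurable marginals and a.e.
α-Hölder paths,
`lim_{n→∞} limsup_{m→∞} P( sup_{t ∈ [0,T]}
  |∑_{i ∈ I_n(⌊nt⌋+1)} (f(·,t_i) - f(·,u_{⌊nt⌋})) ξ_{i,m}| > ε ) = 0` for every `ε > 0`. -/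
theorem stmt_14 (T α : ℝ) (hT : 0 < T) (hα : 1 / 2 < α) (hα1 : α ≤ 1)
    (Ω : Type) (m0 : MeasurableSpace Ω) (μ : Measure Ω) (hμ : IsProbabilityMeasure μ)
    (ξ : ℕ → ℕ → Ω → ℝ) (hmeas : ∀ m i : ℕ, Measurable (ξ m i))
    (C₀ : ℝ) (hC₀ : 0 < C₀)
    (hH2 : ∀ m : ℕ, 1 ≤ m → ∀ j k : ℕ, j < k → k ≤ ⌊(m : ℝ) * T⌋₊ →
      (∫⁻ ω, ENNReal.ofReal (|∑ i ∈ Finset.Icc (j + 1) k, ξ m i ω| ^ 4) ∂μ)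
        ≤ ENNReal.ofReal (C₀ * (((k : ℝ) - (j : ℝ)) / m) ^ 2))
    (f : Ω → ℝ → ℝ) (hfmeas : ∀ t : ℝ, Measurable fun ω => f ω t)
    (hfHolder : ∀ᵐ ω ∂μ, ∃ H : ℝ, ∀ u ∈ Set.Icc (0 : ℝ) T, ∀ v ∈ Set.Icc (0 : ℝ) T,
      |f ω u - f ω v| ≤ H * |u - v| ^ α) :
    ∀ ε : ℝ, 0 < ε →
      Tendsto (fun n : ℕ =>
        limsup (fun m : ℕ =>
          μ {ω : Ω | ε < ⨆ t : Set.Icc (0 : ℝ) T,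
            |∑ i ∈ (Finset.Icc 1 ⌊(m : ℝ) * T⌋₊).filter
                (fun i : ℕ =>
                  ((⌊(n : ℝ) * (t : ℝ)⌋₊ + 1 : ℕ) - 1 : ℝ) / n ≤ (i : ℝ) / m ∧
                    (i : ℝ) / m < ((⌊(n : ℝ) * (t : ℝ)⌋₊ + 1 : ℕ) : ℝ) / n),
              (f ω ((i : ℝ) / m) - f ω ((⌊(n : ℝ) * (t : ℝ)⌋₊ : ℝ) / (n : ℝ))) * ξ m i ω|}) atTop)
        atTop (nhds 0) :=
  stmt_14_general T α hT hα Ω m0 μ hμ ξ hmeas C₀ hC₀ hH2 f hfmeas hfHolder
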